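/- Let N ∈ {3,4,5} and ℓ ∈ (−1,1). Then for every t ∈ ℝ, ∫_{ℝ^N}|∇_x W_ℓ(t,x)|² dx = ((N+(1−N)ℓ²)/(N·√(1−ℓ²)))·∫_{ℝ^N}|∇W|² dx and ∫_{ℝ^N}(∂_t W_ℓ(t,x))² dx = (ℓ²/(N·√(1−ℓ²)))·∫_{ℝ^N}|∇W|² dx. -/

import Mathlib

open MeasureTheory Metric Filter Set

noncomputable section

/-- The ground state `W(x) = (1 + |x|²/(N(N-2)))^(-(N-2)/2)`. -/
def W (N : ℕ) (x : EuclideanSpace ℝ (Fin N)) : ℝ :=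
  (1 + ‖x‖ ^ 2 / ((N : ℝ) * ((N : ℝ) - 2))) ^ (-(((N : ℝ) - 2) / 2))

/-- The energy `E(v₀,v₁)`. -/
def energy (N : ℕ) (v₀ v₁ : EuclideanSpace ℝ (Fin N) → ℝ) : ℝ :=
  (1 / 2) * (∫ x, v₁ x ^ 2)
    + (1 / 2) * (∫ x, ‖gradient v₀ x‖ ^ 2)
    - ((N : ℝ) - 2) / (2 * (N : ℝ)) * (∫ x, |v₀ x| ^ (2 * (N : ℝ) / ((N : ℝ) - 2)))

/-- The first coordinate of a point of `ℝ^N`. -/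
def firstCoord {N : ℕ} (x : EuclideanSpace ℝ (Fin N)) : ℝ :=
  if h : 0 < N then x ⟨0, h⟩ else 0

/-- The Lorentz-transformed ground state `W_ℓ(t,x)`; the sum `x₂² + ⋯ + x_N²` is written
as `‖x‖² - x₁²`. -/
def Wl (N : ℕ) (ℓ : ℝ) (t : ℝ) (x : EuclideanSpace ℝ (Fin N)) : ℝ :=
  (1 + (firstCoord x - t * ℓ) ^ 2 / ((N : ℝ) * ((N : ℝ) - 2) * (1 - ℓ ^ 2))
     + (‖x‖ ^ 2 - firstCoord x ^ 2) / ((N : ℝ) * ((N : ℝ) - 2))) ^ (-(((N : ℝ) - 2) / 2))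

/-- The time derivative `∂ₜ W_ℓ(t,x)`. -/
def dtWl (N : ℕ) (ℓ : ℝ) (t : ℝ) (x : EuclideanSpace ℝ (Fin N)) : ℝ :=
  deriv (fun s => Wl N ℓ s x) t

/-- The second partial derivative `∂²f/∂xⱼ²` at `x`. -/
def d2 {N : ℕ} (f : EuclideanSpace ℝ (Fin N) → ℝ) (j : Fin N)
    (x : EuclideanSpace ℝ (Fin N)) : ℝ :=
  fderiv ℝ (fun y => fderiv ℝ f y (EuclideanSpace.single j 1)) x (EuclideanSpace.single j 1)

/-!
`W_ℓ(t, ·)` is `W` composed with the affine map `x ↦ S (x - tℓ e₁)`, where `S` divides the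
first coordinate by `√(1 - ℓ²)`. By the chain rule `∇ₓW_ℓ = S (∇W ∘ …)` and
`∂ₜW_ℓ = -(ℓ / √(1 - ℓ²)) (∂₁W ∘ …)`, and the change of variables `y = S (x - tℓ e₁)`
contributes the factor `|det S|⁻¹ = √(1 - ℓ²)`. Since `W` is radial, swapping coordinates shows
that `∫ (∂ⱼW)² = N⁻¹ ∫ |∇W|²` for every `j`; both identities follow.
-/

open scoped RealInnerProductSpace

section AddHaar

variable {E : Type*} [NormedAddCommGroup E] [NormedSpace ℝ E] [FiniteDimensional ℝ E]
  [MeasurableSpace E] [BorelSpace E] (μ : Measure E) [μ.IsAddHaarMeasure]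

theorem integral_comp_continuousLinearMap_sub {F : Type*} [NormedAddCommGroup F]
    [NormedSpace ℝ F] {L : E →L[ℝ] E} (hL : LinearMap.det (L : E →ₗ[ℝ] E) ≠ 0) (f : E → F)
    (a : E) : ∫ x, f (L (x - a)) ∂μ = |LinearMap.det (L : E →ₗ[ℝ] E)|⁻¹ • ∫ x, f x ∂μ := by
  let e := (LinearMap.equivOfDetNeZero _ hL).toContinuousLinearEquiv.toHomeomorph
    |>.toMeasurableEquiv
  rw [integral_sub_right_eq_self (fun x => f (L x)) a,
    show (fun x => f (L x)) = fun x => f (e x) from rfl, ← integral_map_equiv e f,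
    show (e : E → E) = (L : E →ₗ[ℝ] E) from rfl,
    Measure.map_linearMap_addHaar_eq_smul_addHaar μ hL, integral_smul_measure,
    ENNReal.toReal_ofReal (abs_nonneg _), abs_inv]

theorem integrable_rpow_neg_one_add_norm_sq_div_mul_norm_sq {r M : ℝ}
    (hr : Module.finrank ℝ E + 2 < 2 * r) (hM : 0 < M) :
    Integrable (fun x => (1 + ‖x‖ ^ 2 / M) ^ (-r) * ‖x‖ ^ 2) μ := by
  have hdom : Integrable (fun x => (1 + ‖(√M)⁻¹ • x‖ ^ 2) ^ (-(2 * r - 2) / 2)) μ :=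
    (integrable_rpow_neg_one_add_norm_sq (by linarith)).comp_smul (by positivity)
  refine (hdom.const_mul M).mono' (by fun_prop) (ae_of_all _ fun x => ?_)
  have hscale : ‖(√M)⁻¹ • x‖ ^ 2 = ‖x‖ ^ 2 / M := by
    rw [norm_smul, mul_pow, norm_inv, Real.norm_of_nonneg (Real.sqrt_nonneg M), inv_pow,
      Real.sq_sqrt hM.le, inv_mul_eq_div]
  rw [hscale]
  set s := ‖x‖ ^ 2 / M
  have hsplit : (1 + s) ^ (-r) = (1 + s) ^ (-(2 * r - 2) / 2) * (1 + s)⁻¹ := by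
    rw [← Real.rpow_neg_one, ← Real.rpow_add (by positivity)]
    ring_nf
  rw [show ‖x‖ ^ 2 = M * s by simp only [s]; field_simp, Real.norm_of_nonneg (by positivity),
    hsplit]
  have hfrac : (1 + s)⁻¹ * s ≤ 1 := by
    rw [inv_mul_le_iff₀ (by positivity)]
    linarith
  calc (1 + s) ^ (-(2 * r - 2) / 2) * (1 + s)⁻¹ * (M * s)
      = M * (1 + s) ^ (-(2 * r - 2) / 2) * ((1 + s)⁻¹ * s) := by ring
    _ ≤ M * (1 + s) ^ (-(2 * r - 2) / 2) := mul_le_of_le_one_right (by positivity) hfrac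

end AddHaar

section Gradient

variable {E : Type*} [NormedAddCommGroup E] [InnerProductSpace ℝ E] [CompleteSpace E]
  {f : E → ℝ} {v x : E}

theorem hasGradientAt_comp_norm_sq {g : ℝ → ℝ} {g' : ℝ} (hg : HasDerivAt g g' (‖x‖ ^ 2)) :
    HasGradientAt (fun y => g (‖y‖ ^ 2)) ((2 * g') • x) x := by
  rw [hasGradientAt_iff_hasFDerivAt]
  refine (hg.comp_hasFDerivAt x (hasStrictFDerivAt_norm_sq x).hasFDerivAt).congr_fderiv ?_
  ext w
  simp only [smul_apply, coe_innerSL_apply, nsmul_eq_mul, Nat.cast_ofNat,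
    smul_eq_mul, map_smul, InnerProductSpace.toDual_apply_apply]
  ring

theorem HasGradientAt.comp_sub_of_isSymmetric {T : E →L[ℝ] E}
    (hT : (T : E →ₗ[ℝ] E).IsSymmetric) {a : E} (hf : HasGradientAt f v (T (x - a))) :
    HasGradientAt (fun y => f (T (y - a))) (T v) x := by
  rw [hasGradientAt_iff_hasFDerivAt] at hf ⊢
  refine (hf.comp x (T.hasFDerivAt.comp x ((hasFDerivAt_id x).sub_const a))).congr_fderiv ?_
  ext w
  simpa using (hT v w).symm

theorem HasGradientAt.hasDerivAt_comp {γ : ℝ → E} {γ' : E} {t : ℝ}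
    (hf : HasGradientAt f v (γ t)) (hγ : HasDerivAt γ γ' t) :
    HasDerivAt (fun s => f (γ s)) ⟪v, γ'⟫ t :=
  (hasGradientAt_iff_hasFDerivAt.mp hf).comp_hasDerivAt t hγ

end Gradient

section Stretch

open Matrix

variable {ι : Type*} [Fintype ι] [DecidableEq ι]

def stretch (i : ι) (c : ℝ) : EuclideanSpace ℝ ι →L[ℝ] EuclideanSpace ℝ ι :=
  toEuclideanCLM (𝕜 := ℝ) (diagonal (Pi.mulSingle i c))

theorem stretch_apply (i : ι) (c : ℝ) (x : EuclideanSpace ℝ ι) (j : ι) :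
    stretch i c x j = (Pi.mulSingle i c : ι → ℝ) j * x j := by
  simp [stretch, mulVec_diagonal]

theorem det_stretch (i : ι) (c : ℝ) :
    LinearMap.det (stretch i c : EuclideanSpace ℝ ι →ₗ[ℝ] _) = c := by
  rw [stretch, coe_toEuclideanCLM_eq_toEuclideanLin, toEuclideanLin, toLpLin_eq_toLin,
    LinearMap.det_toLin, det_diagonal, Finset.prod_pi_mulSingle']
  simp

theorem isSymmetric_stretch (i : ι) (c : ℝ) :
    (stretch i c : EuclideanSpace ℝ ι →ₗ[ℝ] _).IsSymmetric := by
  rw [stretch, coe_toEuclideanCLM_eq_toEuclideanLin, isSymmetric_toEuclideanLin_iff]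
  exact isHermitian_diagonal _

theorem norm_sq_eq_apply_sq_add (x : EuclideanSpace ℝ ι) (i : ι) :
    ‖x‖ ^ 2 = x i ^ 2 + ∑ j ∈ Finset.univ.erase i, x j ^ 2 := by
  simp [EuclideanSpace.norm_sq_eq]

theorem norm_sub_smul_single_sq (x : EuclideanSpace ℝ ι) (i : ι) (a : ℝ) :
    ‖x - a • EuclideanSpace.single i 1‖ ^ 2 = ‖x‖ ^ 2 - x i ^ 2 + (x i - a) ^ 2 := by
  rw [norm_sub_sq_real, real_inner_smul_right, EuclideanSpace.inner_single_right, norm_smul,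
    PiLp.norm_single]
  simp only [Real.ringHom_apply, one_mul, Real.norm_eq_abs, norm_one, mul_one, sq_abs]
  ring

theorem norm_sq_stretch (i : ι) (c : ℝ) (x : EuclideanSpace ℝ ι) :
    ‖stretch i c x‖ ^ 2 = ‖x‖ ^ 2 + (c ^ 2 - 1) * x i ^ 2 := by
  have hfix : ∀ j ∈ Finset.univ.erase i, stretch i c x j ^ 2 = x j ^ 2 := fun j hj => by
    simp [stretch_apply, Finset.ne_of_mem_erase hj]
  rw [norm_sq_eq_apply_sq_add _ i, norm_sq_eq_apply_sq_add x i, Finset.sum_congr rfl hfix,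
    stretch_apply, Pi.mulSingle_eq_same]
  ring

end Stretch

section Equipartition

variable {ι : Type*} [Fintype ι]

theorem integral_comp_apply_norm_eq [DecidableEq ι] (G : ℝ → ℝ → ℝ) (i j : ι) :
    ∫ x : EuclideanSpace ℝ ι, G (x i) ‖x‖ = ∫ x : EuclideanSpace ℝ ι, G (x j) ‖x‖ := by
  let σ := LinearIsometryEquiv.piLpCongrLeft 2 ℝ ℝ (Equiv.swap i j)
  rw [← integral_comp σ fun x : EuclideanSpace ℝ ι => G (x j) ‖x‖]
  congr 1 with x
  rw [σ.norm_map]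
  simp [σ, LinearIsometryEquiv.piLpCongrLeft_apply, Equiv.piCongrLeft'_apply]

theorem integrable_mul_apply_sq {h : ℝ → ℝ} (hh : Measurable h)
    (hint : Integrable fun x : EuclideanSpace ℝ ι => h (‖x‖ ^ 2) * ‖x‖ ^ 2) (i : ι) :
    Integrable fun x : EuclideanSpace ℝ ι => h (‖x‖ ^ 2) * x i ^ 2 := by
  refine hint.norm.mono' (by fun_prop) (ae_of_all _ fun x => ?_)
  rw [norm_mul, norm_mul, norm_pow, norm_pow, norm_norm]
  gcongr
  exact PiLp.norm_apply_le x i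

theorem integral_mul_apply_sq {h : ℝ → ℝ} (hh : Measurable h)
    (hint : Integrable fun x : EuclideanSpace ℝ ι => h (‖x‖ ^ 2) * ‖x‖ ^ 2) (i : ι) :
    ∫ x : EuclideanSpace ℝ ι, h (‖x‖ ^ 2) * x i ^ 2
      = (∫ x : EuclideanSpace ℝ ι, h (‖x‖ ^ 2) * ‖x‖ ^ 2) / Fintype.card ι := by
  classical
  have : Nonempty ι := ⟨i⟩
  have hsum : ∫ x : EuclideanSpace ℝ ι, h (‖x‖ ^ 2) * ‖x‖ ^ 2
      = ∑ j, ∫ x : EuclideanSpace ℝ ι, h (‖x‖ ^ 2) * x j ^ 2 := by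
    rw [← integral_finsetSum _ fun j _ => integrable_mul_apply_sq hh hint j]
    simp [EuclideanSpace.norm_sq_eq, Finset.mul_sum]
  rw [hsum, Finset.sum_congr rfl
    fun j _ => integral_comp_apply_norm_eq (fun u r => h (r ^ 2) * u ^ 2) j i, Finset.sum_const,
    Finset.card_univ, nsmul_eq_mul,
    mul_div_cancel_left₀ _ (Nat.cast_ne_zero.2 Fintype.card_ne_zero)]

end Equipartition

section GroundState

variable {N : ℕ}

def gradWProfile (N : ℕ) (s : ℝ) : ℝ :=
  -(N : ℝ)⁻¹ * (1 + s / (N * (N - 2))) ^ (-(N : ℝ) / 2)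

theorem hasGradientAt_W (hN : 2 < N) (x : EuclideanSpace ℝ (Fin N)) :
    HasGradientAt (W N) (gradWProfile N (‖x‖ ^ 2) • x) x := by
  have hN' : (2 : ℝ) < N := by exact_mod_cast hN
  have hM : (0 : ℝ) < N * (N - 2) := by nlinarith
  have hbase : 0 < 1 + ‖x‖ ^ 2 / (N * (N - 2)) := by positivity
  have hw : HasDerivAt (fun s : ℝ => (1 + s / (N * (N - 2))) ^ (-(((N : ℝ) - 2) / 2)))
      (gradWProfile N (‖x‖ ^ 2) / 2) (‖x‖ ^ 2) := by
    convert (((hasDerivAt_id' (‖x‖ ^ 2)).div_const ((N : ℝ) * (N - 2))).const_add 1).rpow_const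
      (p := -(((N : ℝ) - 2) / 2)) (Or.inl hbase.ne') using 1
    rw [gradWProfile, show -(((N : ℝ) - 2) / 2) - 1 = -(N : ℝ) / 2 by ring]
    generalize (1 + ‖x‖ ^ 2 / (N * (N - 2))) ^ (-(N : ℝ) / 2) = P
    have : (N : ℝ) - 2 ≠ 0 := by linarith
    field_simp
  have hgrad := hasGradientAt_comp_norm_sq hw
  rwa [mul_div_cancel₀ _ two_ne_zero] at hgrad

theorem gradient_W (hN : 2 < N) (x : EuclideanSpace ℝ (Fin N)) :
    gradient (W N) x = gradWProfile N (‖x‖ ^ 2) • x :=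
  (hasGradientAt_W hN x).gradient

theorem measurable_gradWProfile : Measurable (gradWProfile N) := by
  unfold gradWProfile
  fun_prop

theorem integrable_gradWProfile_sq_mul_norm_sq (hN : 2 < N) :
    Integrable fun x : EuclideanSpace ℝ (Fin N) => gradWProfile N (‖x‖ ^ 2) ^ 2 * ‖x‖ ^ 2 := by
  have hN' : (2 : ℝ) < N := by exact_mod_cast hN
  have hM : (0 : ℝ) < N * (N - 2) := by nlinarith
  refine ((integrable_rpow_neg_one_add_norm_sq_div_mul_norm_sq volume (r := N)
    (by simp; linarith) hM).const_mul ((N : ℝ)⁻¹ ^ 2)).congr (ae_of_all _ fun x => ?_)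
  have hbase : 0 ≤ 1 + ‖x‖ ^ 2 / (N * (N - 2)) := by positivity
  simp only [gradWProfile]
  rw [mul_pow, neg_sq, ← Real.rpow_mul_natCast hbase]
  ring_nf

theorem norm_gradient_W_sq (hN : 2 < N) (x : EuclideanSpace ℝ (Fin N)) :
    ‖gradient (W N) x‖ ^ 2 = gradWProfile N (‖x‖ ^ 2) ^ 2 * ‖x‖ ^ 2 := by
  rw [gradient_W hN, norm_smul, mul_pow, Real.norm_eq_abs, sq_abs]

theorem gradient_W_apply_sq (hN : 2 < N) (x : EuclideanSpace ℝ (Fin N)) (i : Fin N) :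
    gradient (W N) x i ^ 2 = gradWProfile N (‖x‖ ^ 2) ^ 2 * x i ^ 2 := by
  rw [gradient_W hN, PiLp.smul_apply, smul_eq_mul, mul_pow]

theorem integrable_norm_gradient_W_sq (hN : 2 < N) :
    Integrable fun x => ‖gradient (W N) x‖ ^ 2 := by
  simpa only [norm_gradient_W_sq hN] using integrable_gradWProfile_sq_mul_norm_sq hN

theorem integrable_gradient_W_apply_sq (hN : 2 < N) (i : Fin N) :
    Integrable fun x => gradient (W N) x i ^ 2 := by
  simpa only [gradient_W_apply_sq hN] using integrable_mul_apply_sq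
    (measurable_gradWProfile.pow_const 2) (integrable_gradWProfile_sq_mul_norm_sq hN) i

theorem integral_gradient_W_apply_sq (hN : 2 < N) (i : Fin N) :
    ∫ x, gradient (W N) x i ^ 2 = (∫ x, ‖gradient (W N) x‖ ^ 2) / N := by
  simp only [gradient_W_apply_sq hN, norm_gradient_W_sq hN]
  rw [integral_mul_apply_sq (measurable_gradWProfile.pow_const 2)
    (integrable_gradWProfile_sq_mul_norm_sq hN) i, Fintype.card_fin]

end GroundState

section LorentzBoost

variable {N : ℕ} [NeZero N] {ℓ c : ℝ}

theorem firstCoord_eq_apply_zero (x : EuclideanSpace ℝ (Fin N)) : firstCoord x = x 0 := by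
  simp [firstCoord, Nat.pos_of_neZero N]

theorem Wl_eq_W_comp (hc : c ^ 2 = 1 - ℓ ^ 2) (s : ℝ) (x : EuclideanSpace ℝ (Fin N)) :
    Wl N ℓ s x = W N (stretch 0 c⁻¹ (x - (s * ℓ) • EuclideanSpace.single 0 1)) := by
  rw [Wl, W, norm_sq_stretch, norm_sub_smul_single_sq, firstCoord_eq_apply_zero, ← hc]
  simp only [PiLp.sub_apply, PiLp.smul_apply, PiLp.single_eq_same, smul_eq_mul, mul_one]
  congr 1
  generalize (N : ℝ) * (N - 2) = M
  ring

theorem gradient_Wl (hN : 2 < N) (hc : c ^ 2 = 1 - ℓ ^ 2) (t : ℝ)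
    (x : EuclideanSpace ℝ (Fin N)) :
    gradient (Wl N ℓ t) x = stretch 0 c⁻¹
      (gradient (W N) (stretch 0 c⁻¹ (x - (t * ℓ) • EuclideanSpace.single 0 1))) := by
  rw [show Wl N ℓ t = _ from funext (Wl_eq_W_comp hc t)]
  exact ((hasGradientAt_W hN _).differentiableAt.hasGradientAt.comp_sub_of_isSymmetric
    (isSymmetric_stretch 0 c⁻¹)).gradient

theorem dtWl_eq (hN : 2 < N) (hc : c ^ 2 = 1 - ℓ ^ 2) (t : ℝ)
    (x : EuclideanSpace ℝ (Fin N)) :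
    dtWl N ℓ t x = -(ℓ * c⁻¹) *
      gradient (W N) (stretch 0 c⁻¹ (x - (t * ℓ) • EuclideanSpace.single 0 1)) 0 := by
  set e : EuclideanSpace ℝ (Fin N) := EuclideanSpace.single 0 1
  have hpath :
      HasDerivAt (fun s => stretch 0 c⁻¹ (x - (s * ℓ) • e)) (stretch 0 c⁻¹ (-(ℓ • e))) t :=
    (stretch 0 c⁻¹).hasFDerivAt.comp_hasDerivAt t
      (((hasDerivAt_mul_const ℓ).smul_const e).const_sub x)
  have hW := (hasGradientAt_W hN _).differentiableAt.hasGradientAt.hasDerivAt_comp hpath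
  have hvel : stretch 0 c⁻¹ (-(ℓ • e)) = -(ℓ * c⁻¹) • e := by
    ext j
    by_cases hj : j = 0 <;> simp [e, stretch_apply, hj]
  rw [dtWl, show (fun s => Wl N ℓ s x) = _ from funext fun s => Wl_eq_W_comp hc s x, hW.deriv,
    hvel, real_inner_smul_right, EuclideanSpace.inner_single_right]
  simp

theorem integral_norm_gradient_Wl_sq (hN : 2 < N) (hc : c ^ 2 = 1 - ℓ ^ 2) (hc0 : 0 < c)
    (t : ℝ) :
    ∫ x, ‖gradient (Wl N ℓ t) x‖ ^ 2
      = c * (1 + (c⁻¹ ^ 2 - 1) / N) * ∫ x, ‖gradient (W N) x‖ ^ 2 := by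
  have hdet := (det_stretch (0 : Fin N) c⁻¹).trans_ne (inv_ne_zero hc0.ne')
  simp only [gradient_Wl hN hc t]
  rw [integral_comp_continuousLinearMap_sub volume hdet
    (fun y => ‖stretch 0 c⁻¹ (gradient (W N) y)‖ ^ 2)]
  simp only [norm_sq_stretch]
  rw [integral_add (integrable_norm_gradient_W_sq hN)
    ((integrable_gradient_W_apply_sq hN 0).const_mul _), integral_const_mul,
    integral_gradient_W_apply_sq hN, det_stretch, abs_inv, inv_inv, abs_of_pos hc0, smul_eq_mul]
  ring

theorem integral_dtWl_sq (hN : 2 < N) (hc : c ^ 2 = 1 - ℓ ^ 2) (hc0 : 0 < c) (t : ℝ) :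
    ∫ x, dtWl N ℓ t x ^ 2 = c * (ℓ * c⁻¹) ^ 2 / N * ∫ x, ‖gradient (W N) x‖ ^ 2 := by
  have hdet := (det_stretch (0 : Fin N) c⁻¹).trans_ne (inv_ne_zero hc0.ne')
  simp only [dtWl_eq hN hc t, mul_pow, neg_sq]
  rw [integral_const_mul, integral_comp_continuousLinearMap_sub volume hdet
    (fun y => gradient (W N) y 0 ^ 2), integral_gradient_W_apply_sq hN, det_stretch, abs_inv,
    inv_inv, abs_of_pos hc0, smul_eq_mul]
  ring

end LorentzBoost

/-- Claim 2.3, first line: the kinetic quantities of the solitary wave `W_ℓ`. -/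
theorem stmt2 (N : ℕ) (hN : N = 3 ∨ N = 4 ∨ N = 5)
    (ℓ : ℝ) (hℓ : ℓ ∈ Set.Ioo (-1 : ℝ) 1) (t : ℝ) :
    (∫ x, ‖gradient (Wl N ℓ t) x‖ ^ 2)
        = (((N : ℝ) + (1 - (N : ℝ)) * ℓ ^ 2) / ((N : ℝ) * Real.sqrt (1 - ℓ ^ 2)))
            * (∫ x, ‖gradient (W N) x‖ ^ 2)
      ∧ (∫ x, dtWl N ℓ t x ^ 2)
        = (ℓ ^ 2 / ((N : ℝ) * Real.sqrt (1 - ℓ ^ 2)))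
            * (∫ x, ‖gradient (W N) x‖ ^ 2) := by
  have hN2 : 2 < N := by omega
  have : NeZero N := ⟨by omega⟩
  have hℓ2 : 0 < 1 - ℓ ^ 2 := by nlinarith [hℓ.1, hℓ.2]
  have hc0 : 0 < √(1 - ℓ ^ 2) := Real.sqrt_pos.2 hℓ2
  have hc : √(1 - ℓ ^ 2) ^ 2 = 1 - ℓ ^ 2 := Real.sq_sqrt hℓ2.le
  rw [integral_norm_gradient_Wl_sq hN2 hc hc0, integral_dtWl_sq hN2 hc hc0]
  constructor <;> congr 1
  · field_simp
    rw [hc]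
    ring
  · field_simp
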